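/- Let A be a bounded operator with closed range on a complex Hilbert space H, U = A†A and V = AA†. Then for any unit vector u and r ≥ 1, |⟨Au,u⟩|^(2r) ≤ (1/4) ⟨(|A|^r + |A*|^r) u, u⟩ · ⟨((U|A|U)^r + (V|A*|V)^r) u, u⟩. -/

import Mathlib

set_option synthInstance.maxHeartbeats 1000000
set_option maxHeartbeats 1000000

open scoped InnerProductSpace
open ContinuousLinearMap

section MyHelpers
open Polynomial
open scoped NNReal

set_option maxHeartbeats 1000000
variable {H : Type*} [NormedAddCommGroup H] [InnerProductSpace ℂ H] [CompleteSpace H] [Nontrivial H]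


lemma my_aeval_intertwine (X B C : H →L[ℂ] H) (h : X * B = C * X) (q : Polynomial ℝ) :
    X * (Polynomial.aeval B q) = (Polynomial.aeval C q) * X := by
  have hpow : ∀ n : ℕ, X * B ^ n = C ^ n * X := by
    intro n; induction n with
    | zero => simp
    | succ k ih => rw [pow_succ, ← mul_assoc, ih, mul_assoc, h, ← mul_assoc, ← pow_succ]
  induction q using Polynomial.induction_on' with
  | add p q hp hq => simp only [map_add, mul_add, add_mul, hp, hq]
  | monomial n a =>
    simp only [Polynomial.aeval_monomial, Algebra.algebraMap_eq_smul_one, smul_mul_assoc,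
      one_mul, mul_smul_comm, hpow]


lemma my_intertwine (X B C : H →L[ℂ] H) (hB : IsSelfAdjoint B) (hC : IsSelfAdjoint C)
    (h : X * B = C * X) (f : ℝ → ℝ) (hf : Continuous f)
    (hq : ∀ q : Polynomial ℝ, X * (Polynomial.aeval B q) = (Polynomial.aeval C q) * X) :
    X * cfc f B = cfc f C * X := by
  set M : ℝ := max ‖B‖ ‖C‖ with hM
  have hBM : spectrum ℝ B ⊆ Set.Icc (-M) M := by
    refine (spectrum.subset_closedBall_norm B).trans ?_
    rw [Real.closedBall_eq_Icc, zero_sub, zero_add]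
    exact Set.Icc_subset_Icc (neg_le_neg (le_max_left _ _)) (le_max_left _ _)
  have hCM : spectrum ℝ C ⊆ Set.Icc (-M) M := by
    refine (spectrum.subset_closedBall_norm C).trans ?_
    rw [Real.closedBall_eq_Icc, zero_sub, zero_add]
    exact Set.Icc_subset_Icc (neg_le_neg (le_max_right _ _)) (le_max_right _ _)
  have key : ∀ ε : ℝ, 0 < ε → ‖X * cfc f B - cfc f C * X‖ ≤ 2 * ‖X‖ * ε := by
    intro ε hε
    obtain ⟨p, hp⟩ := exists_polynomial_near_continuousMap (-M) M
      ⟨fun t => f t.1, hf.comp continuous_subtype_val⟩ ε hε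
    have hclose : ∀ t ∈ Set.Icc (-M) M, ‖f t - p.eval t‖ ≤ ε := by
      intro t ht
      have := (p.toContinuousMapOn (Set.Icc (-M) M) - ⟨fun t => f t.1, hf.comp continuous_subtype_val⟩).norm_coe_le_norm ⟨t, ht⟩
      rw [ContinuousMap.sub_apply] at this
      simp only [Polynomial.toContinuousMapOn_apply, Polynomial.toContinuousMap_apply,
        ContinuousMap.coe_mk] at this
      rw [norm_sub_rev]
      exact this.trans hp.le
    have hnB : ‖cfc f B - cfc p.eval B‖ ≤ ε := by
      rw [← cfc_sub f p.eval B hf.continuousOn (p.continuous_aeval).continuousOn]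
      exact norm_cfc_le hε.le fun x hx => hclose x (hBM hx)
    have hnC : ‖cfc f C - cfc p.eval C‖ ≤ ε := by
      rw [← cfc_sub f p.eval C hf.continuousOn (p.continuous_aeval).continuousOn]
      exact norm_cfc_le hε.le fun x hx => hclose x (hCM hx)
    have hpBC : X * cfc p.eval B = cfc p.eval C * X := by
      rw [cfc_polynomial p B hB, cfc_polynomial p C hC]; exact hq p
    have hb1 : ‖X * (cfc f B - cfc p.eval B)‖ ≤ ‖X‖ * ε :=
      (norm_mul_le _ _).trans (mul_le_mul_of_nonneg_left hnB (norm_nonneg X))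
    have hb2 : ‖(cfc p.eval C - cfc f C) * X‖ ≤ ε * ‖X‖ :=
      (norm_mul_le _ _).trans (mul_le_mul_of_nonneg_right
        (norm_sub_rev (cfc p.eval C) _ ▸ hnC) (norm_nonneg X))
    calc ‖X * cfc f B - cfc f C * X‖
        = ‖X * (cfc f B - cfc p.eval B) + (cfc p.eval C - cfc f C) * X‖ := by
          rw [mul_sub, sub_mul, hpBC]; abel_nf
      _ ≤ ‖X * (cfc f B - cfc p.eval B)‖ + ‖(cfc p.eval C - cfc f C) * X‖ := norm_add_le _ _
      _ ≤ ‖X‖ * ε + ε * ‖X‖ := add_le_add hb1 hb2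
      _ = 2 * ‖X‖ * ε := by ring
  have hle : ‖X * cfc f B - cfc f C * X‖ ≤ 0 := by
    by_contra hcon
    push_neg at hcon
    have h2 := key (‖X * cfc f B - cfc f C * X‖ / (2 * ‖X‖ + 1)) (by positivity)
    have hX : 0 ≤ ‖X‖ := norm_nonneg X
    have hinv : (2 * ‖X‖ + 1) * (2 * ‖X‖ + 1)⁻¹ = 1 := mul_inv_cancel₀ (by positivity)
    have hc : 0 < (2 * ‖X‖ + 1)⁻¹ := by positivity
    rw [div_eq_mul_inv] at h2
    nlinarith [mul_pos hcon hc]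
  exact sub_eq_zero.mp (norm_le_zero_iff.mp hle)
set_option maxHeartbeats 1000000
open scoped InnerProductSpace NNReal
open ContinuousLinearMap
variable {H : Type*} [NormedAddCommGroup H] [InnerProductSpace ℂ H] [CompleteSpace H] [Nontrivial H]

-- quadratic form monotonicity
lemma my_inner_mono (f g : H →L[ℂ] H) (h : f ≤ g) (u : H) :
    (⟪f u, u⟫_ℂ).re ≤ (⟪g u, u⟫_ℂ).re := by
  have := ((le_def f g).mp h).inner_nonneg_left u
  simp only [sub_apply, inner_sub_left, map_sub, RCLike.re_to_complex] at this
  have h' := (Complex.le_def.mp this).1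
  simp only [Complex.zero_re, Complex.sub_re] at h'
  linarith

lemma my_inner_nonneg (f : H →L[ℂ] H) (h : 0 ≤ f) (u : H) : 0 ≤ (⟪f u, u⟫_ℂ).re := by
  simpa using my_inner_mono 0 f h u

-- pointwise Young
lemma my_young {x l r : ℝ} (hx : 0 ≤ x) (hl : 0 < l) (hr : 1 ≤ r) :
    x ≤ l ^ (1 - r) / r * x ^ r + l * (1 - 1 / r) := by
  have hr0 : (0:ℝ) < r := lt_of_lt_of_le one_pos hr
  set y := x / l with hy
  have hy0 : 0 ≤ y := div_nonneg hx hl.le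
  have hb : 1 + r * (y - 1) ≤ y ^ r := by
    have := one_add_mul_self_le_rpow_one_add (s := y - 1) (by linarith) hr
    simpa using this
  have hxy : x = l * y := by rw [hy, mul_div_assoc', mul_div_cancel_left₀ x hl.ne']
  have hxr : x ^ r = l ^ r * y ^ r := by
    rw [hxy, Real.mul_rpow hl.le hy0]
  have hlr : l ^ (1 - r) * l ^ r = l := by
    rw [← Real.rpow_add hl]; simp
  rw [hxr, hxy]
  have h1 : l ^ (1 - r) / r * (l ^ r * y ^ r) = (l ^ (1-r) * l ^ r) * y ^ r / r := by ring
  rw [h1, hlr]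
  have h2 := mul_le_mul_of_nonneg_right hb (inv_nonneg.mpr hr0.le)
  have h3 : (1 + r * (y - 1)) * r⁻¹ = r⁻¹ + y - 1 := by field_simp; ring
  rw [h3] at h2
  have key : y ≤ y ^ r / r + (1 - 1 / r) := by
    rw [div_eq_mul_inv, one_div]; linarith
  calc l * y ≤ l * (y ^ r / r + (1 - 1 / r)) := mul_le_mul_of_nonneg_left key hl.le
    _ = l * y ^ r / r + l * (1 - 1 / r) := by ring

lemma my_inner_smul_re (c : ℝ) (v u : H) : (⟪c • v, u⟫_ℂ).re = c * (⟪v, u⟫_ℂ).re := by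
  rw [← algebraMap_smul ℂ c v, inner_smul_left]
  simp [Complex.coe_algebraMap, Complex.conj_ofReal]

lemma my_op_young (T : H →L[ℂ] H) (hT : 0 ≤ T) {r : ℝ} (hr : 1 ≤ r) {l : ℝ} (hl : 0 < l) :
    T ≤ (l ^ (1 - r) / r) • (T ^ r) + (l * (1 - 1 / r)) • (1 : H →L[ℂ] H) := by
  have hTsa : IsSelfAdjoint T := .of_nonneg hT
  have hg : Continuous (fun x : ℝ => ((Real.toNNReal x ^ r : ℝ≥0) : ℝ)) :=
    NNReal.continuous_coe.comp
      ((NNReal.continuous_rpow_const (by linarith)).comp continuous_real_toNNReal)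
  have hTr : T ^ r = cfc (fun x : ℝ => ((Real.toNNReal x ^ r : ℝ≥0) : ℝ)) T := by
    rw [CFC.rpow_def, cfc_nnreal_eq_real _ _ hT]
  have hsplit : cfc (fun x : ℝ => l ^ (1 - r) / r * ((Real.toNNReal x ^ r : ℝ≥0) : ℝ)
      + l * (1 - 1 / r)) T
      = (l ^ (1 - r) / r) • (T ^ r) + (l * (1 - 1 / r)) • (1 : H →L[ℂ] H) := by
    rw [cfc_add (a := T) (fun x : ℝ => l ^ (1 - r) / r * ((Real.toNNReal x ^ r : ℝ≥0) : ℝ))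
        (fun _ : ℝ => l * (1 - 1 / r)) ((continuous_const.mul hg).continuousOn)
        continuousOn_const,
      cfc_const_mul (l ^ (1 - r) / r) (fun x : ℝ => ((Real.toNNReal x ^ r : ℝ≥0) : ℝ)) T
        hg.continuousOn,
      cfc_const _ T hTsa, Algebra.algebraMap_eq_smul_one, hTr]
  calc T = cfc (id : ℝ → ℝ) T := (cfc_id ℝ T hTsa).symm
    _ ≤ _ := by
        rw [← hsplit]
        apply cfc_mono _ continuousOn_id ((continuous_const.mul hg).add continuous_const).continuousOn
        intro x hx
        have hx0 : 0 ≤ x := spectrum_nonneg_of_nonneg hT hx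
        have hco : ((Real.toNNReal x ^ r : ℝ≥0) : ℝ) = x ^ r := by
          rw [NNReal.coe_rpow, Real.coe_toNNReal x hx0]
        simp only [id_eq, Pi.add_apply, Pi.mul_apply, hco]
        exact my_young hx0 hl hr

lemma my_mccarthy (T : H →L[ℂ] H) (hT : 0 ≤ T) {r : ℝ} (hr : 1 ≤ r)
    (u : H) (hu : ‖u‖ = 1) :
    (⟪T u, u⟫_ℂ).re ^ r ≤ (⟪(T ^ r) u, u⟫_ℂ).re := by
  have hr0 : (0:ℝ) < r := lt_of_lt_of_le one_pos hr
  set a := (⟪T u, u⟫_ℂ).re with ha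
  set b := (⟪(T ^ r) u, u⟫_ℂ).re with hb
  have ha0 : 0 ≤ a := my_inner_nonneg T hT u
  have hb0 : 0 ≤ b := my_inner_nonneg _ CFC.rpow_nonneg u
  have key : ∀ l : ℝ, 0 < l → a ≤ l ^ (1 - r) / r * b + l * (1 - 1 / r) := by
    intro l hl
    have h1 := my_inner_mono _ _ (my_op_young T hT hr hl) u
    have h2 : (⟪((l ^ (1 - r) / r) • (T ^ r) + (l * (1 - 1 / r)) • (1 : H →L[ℂ] H)) u, u⟫_ℂ).re
        = l ^ (1 - r) / r * b + l * (1 - 1 / r) := by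
      simp only [ContinuousLinearMap.add_apply, ContinuousLinearMap.coe_smul', Pi.smul_apply,
        ContinuousLinearMap.one_apply, inner_add_left, Complex.add_re, my_inner_smul_re]
      have huu : (⟪u, u⟫_ℂ).re = 1 := by
        rw [inner_self_eq_norm_sq_to_K, hu]; norm_num
      rw [huu, ← hb]; ring
    rw [h2] at h1
    exact h1
  rcases eq_or_lt_of_le hb0 with hbz | hbp
  · -- b = 0
    have haz : a = 0 := by
      by_contra hane
      have hap : 0 < a := lt_of_le_of_ne ha0 (Ne.symm hane)
      rcases eq_or_lt_of_le hr with hre | hrl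
      · have := key 1 one_pos
        rw [← hbz, ← hre] at this
        norm_num at this
        linarith
      · have hq : 0 < 1 - 1 / r := by
          rw [sub_pos, div_lt_one hr0]; exact hrl
        have hthis := key (a / (2 * (1 - 1 / r))) (by positivity)
        rw [← hbz, mul_zero, zero_add] at hthis
        have he : a / (2 * (1 - 1 / r)) * (1 - 1 / r) = a / 2 := by
          rw [div_mul_eq_mul_div, mul_comm a (1 - 1/r), mul_comm 2 (1 - 1/r),
            mul_div_mul_left _ _ (ne_of_gt hq)]
        rw [he] at hthis
        linarith
    rw [haz, ← hbz, Real.zero_rpow (ne_of_gt hr0)]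
  · -- 0 < b
    set l := b ^ (1 / r) with hldef
    have hlp : 0 < l := Real.rpow_pos_of_pos hbp _
    have hcomp : l ^ (1 - r) * b = l := by
      rw [hldef, ← Real.rpow_mul hbp.le]
      nth_rewrite 2 [show b = b ^ (1:ℝ) from (Real.rpow_one b).symm]
      rw [← Real.rpow_add hbp]
      congr 1
      field_simp
      ring
    have hkey := key l hlp
    have : l ^ (1 - r) / r * b + l * (1 - 1 / r) = l := by
      field_simp
      nlinarith [hcomp]
    rw [this] at hkey
    calc a ^ r ≤ l ^ r := Real.rpow_le_rpow ha0 hkey hr0.le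
      _ = b := by
        rw [hldef, ← Real.rpow_mul hbp.le, one_div, inv_mul_cancel₀ (ne_of_gt hr0),
          Real.rpow_one]

lemma my_sqrt_eq (B : H →L[ℂ] H) (hB : 0 ≤ B) : CFC.sqrt B = cfc Real.sqrt B := by
  rw [CFC.sqrt_eq_cfc, cfc_nnreal_eq_real _ _ hB]
  exact cfc_congr fun x _ => by rw [Real.sqrt]

lemma my_schwarz (A : H →L[ℂ] H) (u : H) (hu : ‖u‖ = 1) :
    ‖⟪A u, u⟫_ℂ‖ ^ 2 ≤ (⟪CFC.sqrt (adjoint A * A) u, u⟫_ℂ).re *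
      (⟪CFC.sqrt (A * adjoint A) u, u⟫_ℂ).re := by
  set B := adjoint A * A with hBdef
  set C := A * adjoint A with hCdef
  have hB : (0 : H →L[ℂ] H) ≤ B := by
    simpa [star_eq_adjoint] using star_mul_self_nonneg A
  have hC : (0 : H →L[ℂ] H) ≤ C := by
    simpa [star_eq_adjoint] using mul_star_self_nonneg A
  have hBsa : IsSelfAdjoint B := .of_nonneg hB
  have hCsa : IsSelfAdjoint C := .of_nonneg hC
  have hABC : A * B = C * A := by rw [hBdef, hCdef, mul_assoc]
  set a := (⟪CFC.sqrt B u, u⟫_ℂ).re with ha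
  set b := (⟪CFC.sqrt C u, u⟫_ℂ).re with hb
  have ha0 : 0 ≤ a := my_inner_nonneg _ (CFC.sqrt_nonneg _) u
  have hb0 : 0 ≤ b := my_inner_nonneg _ (CFC.sqrt_nonneg _) u
  have key : ∀ ε : ℝ, 0 < ε → ‖⟪A u, u⟫_ℂ‖ ^ 2 ≤ a * b + a * ε := by
    intro ε hε
    set g : ℝ → ℝ := fun t => 1 / Real.sqrt (Real.sqrt t + ε) with hgdef
    set h : ℝ → ℝ := fun t => Real.sqrt (Real.sqrt t + ε) with hhdef
    have hpos : ∀ t : ℝ, 0 < Real.sqrt t + ε := fun t => by positivity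
    have hhpos : ∀ t : ℝ, 0 < h t := fun t => Real.sqrt_pos.mpr (hpos t)
    have hhcont : Continuous h := Real.continuous_sqrt.comp
      ((Real.continuous_sqrt).add continuous_const)
    have hgcont : Continuous g := continuous_const.div hhcont fun t => (hhpos t).ne'
    have hiw : A * cfc g B = cfc g C * A :=
      my_intertwine A B C hBsa hCsa hABC g hgcont (my_aeval_intertwine A B C hABC)
    have hSsa : IsSelfAdjoint (cfc h C) := cfc_predicate h C
    have hgsa : IsSelfAdjoint (cfc g B) := cfc_predicate g B
    have hrec : cfc h C * (A * cfc g B) = A := by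
      rw [hiw, ← mul_assoc, ← cfc_mul h g C hhcont.continuousOn hgcont.continuousOn]
      have : cfc (fun x => h x * g x) C = 1 := by
        have : ∀ x : ℝ, h x * g x = 1 := fun x => by
          rw [hhdef, hgdef]
          field_simp
        rw [funext this, cfc_const_one ℝ C hCsa]
      rw [this, one_mul]
    -- inner product rearrangement
    have hinner : ⟪A u, u⟫_ℂ = ⟪(A * cfc g B) u, cfc h C u⟫_ℂ := by
      conv_lhs => rw [← hrec]
      rw [show (cfc h C * (A * cfc g B)) u = cfc h C ((A * cfc g B) u) from rfl,
        ← hSsa.adjoint_eq, adjoint_inner_left, hSsa.adjoint_eq]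
    -- bound ‖Y u‖ ^ 2
    have hYsq : ‖(A * cfc g B) u‖ ^ 2 ≤ a := by
      have h1 : (‖(A * cfc g B) u‖ : ℝ) ^ 2
          = (⟪(star (A * cfc g B) * (A * cfc g B)) u, u⟫_ℂ).re := by
        rw [show (star (A * cfc g B) * (A * cfc g B)) u
            = star (A * cfc g B) ((A * cfc g B) u) from rfl, star_eq_adjoint,
          adjoint_inner_left, ← inner_self_eq_norm_sq (𝕜 := ℂ) ((A * cfc g B) u)]
        rfl
      have h2 : star (A * cfc g B) * (A * cfc g B) = cfc (fun t => g t * t * g t) B := by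
        rw [star_mul, star_eq_adjoint (cfc g B), hgsa.adjoint_eq]
        calc cfc g B * star A * (A * cfc g B) = cfc g B * (star A * A) * cfc g B := by
              rw [mul_assoc, mul_assoc, mul_assoc]
          _ = cfc g B * B * cfc g B := by rw [hBdef, star_eq_adjoint]
          _ = cfc (fun t => g t * t * g t) B := by
              rw [cfc_mul (fun t => g t * t) g B (by fun_prop) hgcont.continuousOn,
                cfc_mul g (fun t : ℝ => t) B hgcont.continuousOn (by fun_prop), cfc_id' ℝ B hBsa]
      have h3 : cfc (fun t => g t * t * g t) B ≤ CFC.sqrt B := by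
        rw [my_sqrt_eq B hB]
        apply cfc_mono _ (by fun_prop) Real.continuous_sqrt.continuousOn
        intro x hx
        have hx0 : 0 ≤ x := spectrum_nonneg_of_nonneg hB hx
        have hsq : Real.sqrt x * Real.sqrt x = x := Real.mul_self_sqrt hx0
        have hg2 : g x * x * g x = x / (Real.sqrt x + ε) := by
          calc g x * x * g x = x * (g x * g x) := by ring
            _ = x * (1 / (Real.sqrt x + ε)) := by
                rw [hgdef]
                rw [div_mul_div_comm, one_mul, Real.mul_self_sqrt (hpos x).le]
            _ = x / (Real.sqrt x + ε) := by ring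
        rw [hg2, div_le_iff₀ (hpos x)]
        nlinarith [Real.sqrt_nonneg x]
      calc ‖(A * cfc g B) u‖ ^ 2 = (⟪(star (A * cfc g B) * (A * cfc g B)) u, u⟫_ℂ).re := h1
        _ = (⟪cfc (fun t => g t * t * g t) B u, u⟫_ℂ).re := by rw [h2]
        _ ≤ a := my_inner_mono _ _ h3 u
    -- ‖S u‖ ^ 2 = b + ε
    have hSsq : ‖cfc h C u‖ ^ 2 = b + ε := by
      have h1 : (‖cfc h C u‖ : ℝ) ^ 2 = (⟪(cfc h C * cfc h C) u, u⟫_ℂ).re := by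
        rw [show (cfc h C * cfc h C) u = cfc h C (cfc h C u) from rfl,
          ← hSsa.adjoint_eq, adjoint_inner_left, hSsa.adjoint_eq,
          ← inner_self_eq_norm_sq (𝕜 := ℂ) (cfc h C u)]
        rfl
      have h2 : cfc h C * cfc h C = CFC.sqrt C + ε • 1 := by
        rw [← cfc_mul h h C hhcont.continuousOn hhcont.continuousOn]
        have : (fun x => h x * h x) = fun x : ℝ => Real.sqrt x + ε := by
          funext x
          rw [hhdef, Real.mul_self_sqrt (hpos x).le]
        rw [this, cfc_add (a := C) Real.sqrt (fun _ => ε) Real.continuous_sqrt.continuousOn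
          continuousOn_const, cfc_const ε C hCsa, my_sqrt_eq C hC,
          Algebra.algebraMap_eq_smul_one]
      rw [h1, h2]
      simp only [ContinuousLinearMap.add_apply, ContinuousLinearMap.coe_smul', Pi.smul_apply,
        ContinuousLinearMap.one_apply, inner_add_left, Complex.add_re, my_inner_smul_re]
      have huu : (⟪u, u⟫_ℂ).re = 1 := by
        rw [inner_self_eq_norm_sq_to_K, hu]; norm_num
      rw [huu, hb]; ring
    calc ‖⟪A u, u⟫_ℂ‖ ^ 2 = ‖⟪(A * cfc g B) u, cfc h C u⟫_ℂ‖ ^ 2 := by rw [hinner]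
      _ ≤ (‖(A * cfc g B) u‖ * ‖cfc h C u‖) ^ 2 := by
          have := norm_inner_le_norm (𝕜 := ℂ) ((A * cfc g B) u) (cfc h C u)
          exact pow_le_pow_left₀ (norm_nonneg _) this 2
      _ = ‖(A * cfc g B) u‖ ^ 2 * ‖cfc h C u‖ ^ 2 := by ring
      _ ≤ a * (b + ε) := by
          rw [hSsq]
          apply mul_le_mul_of_nonneg_right hYsq
          linarith
      _ = a * b + a * ε := by ring
  apply le_of_forall_pos_le_add
  intro δ hδ
  calc ‖⟪A u, u⟫_ℂ‖ ^ 2 ≤ a * b + a * (δ / (a + 1)) := key _ (by positivity)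
    _ ≤ a * b + δ := by
        have : a * (δ / (a + 1)) ≤ δ := by
          rw [mul_div_assoc']
          rw [div_le_iff₀ (by positivity)]
          nlinarith
        linarith

lemma my_proj_absorb (U B : H →L[ℂ] H) (hU2 : U * U = U) (hUsa : IsSelfAdjoint U)
    (hB : 0 ≤ B) (hUB : U * B = B) (hBU : B * U = B) :
    U * CFC.sqrt B * U = CFC.sqrt B := by
  have hBsa : IsSelfAdjoint B := .of_nonneg hB
  have hcomm : U * CFC.sqrt B = CFC.sqrt B * U := by
    rw [my_sqrt_eq B hB]
    exact my_intertwine U B B hBsa hBsa (hUB.trans hBU.symm) Real.sqrt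
      Real.continuous_sqrt (my_aeval_intertwine U B B (hUB.trans hBU.symm))
  set t := CFC.sqrt B with htdef
  have htsa : IsSelfAdjoint t := .of_nonneg (CFC.sqrt_nonneg _)
  have htt : t * t = B := CFC.sqrt_mul_sqrt_self B hB
  have hUt : U * t = t := by
    have hD : (t - U * t) * (t - U * t) = 0 := by
      have e1 : t * (U * t) = B := by rw [← mul_assoc, ← hcomm, mul_assoc, htt, hUB]
      have e2 : (U * t) * t = B := by rw [mul_assoc, htt, hUB]
      have e3 : (U * t) * (U * t) = B := by
        rw [show U * t * (U * t) = U * (t * U) * t from by simp only [mul_assoc], ← hcomm,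
          show U * (U * t) * t = (U * U) * (t * t) from by simp only [mul_assoc], hU2, htt, hUB]
      rw [sub_mul, mul_sub, mul_sub, htt, e1, e2, e3]
      abel
    have hDsa : IsSelfAdjoint (t - U * t) := by
      rw [IsSelfAdjoint, star_sub, star_mul, htsa.star_eq, hUsa.star_eq, ← hcomm]
    have : ‖t - U * t‖ * ‖t - U * t‖ = 0 := by
      rw [← CStarRing.norm_star_mul_self, hDsa.star_eq, hD, norm_zero]
    have h0 : t - U * t = 0 := by
      rw [← norm_eq_zero]
      nlinarith [norm_nonneg (t - U * t)]
    exact (sub_eq_zero.mp h0).symm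
  have htU : t * U = t := by rw [← hcomm, hUt]
  rw [hUt, htU]


end MyHelpers

theorem stmt_11 {H : Type*} [NormedAddCommGroup H] [InnerProductSpace ℂ H]
    [CompleteSpace H] (A Ad : H →L[ℂ] H) (hran : IsClosed (Set.range A))
    (h1 : A * Ad * A = A) (h2 : Ad * A * Ad = Ad)
    (h3 : adjoint (A * Ad) = A * Ad) (h4 : adjoint (Ad * A) = Ad * A)
    (r : ℝ) (hr : 1 ≤ r) (u : H) (hu : ‖u‖ = 1) :
    ‖⟪A u, u⟫_ℂ‖ ^ (2 * r) ≤
      (1 / 4) *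
        ((⟪((CFC.sqrt (adjoint A * A)) ^ r + (CFC.sqrt (A * adjoint A)) ^ r) u,
            u⟫_ℂ).re *
          (⟪(((Ad * A) * CFC.sqrt (adjoint A * A) * (Ad * A)) ^ r +
              ((A * Ad) * CFC.sqrt (A * adjoint A) * (A * Ad)) ^ r) u,
            u⟫_ℂ).re) := by
  rcases subsingleton_or_nontrivial H with hsub | hnt
  · have hu0 : u = 0 := Subsingleton.elim u 0
    rw [hu0, norm_zero] at hu
    norm_num at hu
  set B := adjoint A * A with hBdef
  set C := A * adjoint A with hCdef
  have hB : (0 : H →L[ℂ] H) ≤ B := by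
    simpa [star_eq_adjoint] using star_mul_self_nonneg A
  have hC : (0 : H →L[ℂ] H) ≤ C := by
    simpa [star_eq_adjoint] using mul_star_self_nonneg A
  have hUsa : IsSelfAdjoint (Ad * A) := by rw [IsSelfAdjoint, star_eq_adjoint]; exact h4
  have hVsa : IsSelfAdjoint (A * Ad) := by rw [IsSelfAdjoint, star_eq_adjoint]; exact h3
  have hAU : A * (Ad * A) = A := by rw [← mul_assoc]; exact h1
  have hU2 : (Ad * A) * (Ad * A) = Ad * A := by
    calc (Ad * A) * (Ad * A) = (Ad * A * Ad) * A := by simp only [mul_assoc]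
      _ = Ad * A := by rw [h2]
  have hV2 : (A * Ad) * (A * Ad) = A * Ad := by
    calc (A * Ad) * (A * Ad) = (A * Ad * A) * Ad := by simp only [mul_assoc]
      _ = A * Ad := by rw [h1]
  have hUadj : (Ad * A) * adjoint A = adjoint A := by
    calc (Ad * A) * adjoint A = star (Ad * A) * star A := by
          rw [hUsa.star_eq, star_eq_adjoint]
      _ = star (A * (Ad * A)) := (star_mul _ _).symm
      _ = adjoint A := by rw [hAU, star_eq_adjoint]
  have hUB : (Ad * A) * B = B := by
    rw [hBdef, ← mul_assoc, hUadj]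
  have hBU : B * (Ad * A) = B := by
    have hBsa : IsSelfAdjoint B := .of_nonneg hB
    calc B * (Ad * A) = star (star (Ad * A) * star B) := by rw [star_mul, star_star, star_star]
      _ = star ((Ad * A) * B) := by rw [hUsa.star_eq, hBsa.star_eq]
      _ = B := by rw [hUB, hBsa.star_eq]
  have hVC : (A * Ad) * C = C := by
    rw [hCdef, ← mul_assoc, h1]
  have hCV : C * (A * Ad) = C := by
    have hCsa : IsSelfAdjoint C := .of_nonneg hC
    calc C * (A * Ad) = star (star (A * Ad) * star C) := by rw [star_mul, star_star, star_star]
      _ = star ((A * Ad) * C) := by rw [hVsa.star_eq, hCsa.star_eq]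
      _ = C := by rw [hVC, hCsa.star_eq]
  have habsorbU : (Ad * A) * CFC.sqrt B * (Ad * A) = CFC.sqrt B :=
    my_proj_absorb (Ad * A) B hU2 hUsa hB hUB hBU
  have habsorbV : (A * Ad) * CFC.sqrt C * (A * Ad) = CFC.sqrt C :=
    my_proj_absorb (A * Ad) C hV2 hVsa hC hVC hCV
  rw [habsorbU, habsorbV]
  -- numeric part
  set x := ‖⟪A u, u⟫_ℂ‖ with hx
  set a := (⟪CFC.sqrt B u, u⟫_ℂ).re with ha
  set b := (⟪CFC.sqrt C u, u⟫_ℂ).re with hb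
  set P := (⟪(CFC.sqrt B ^ r) u, u⟫_ℂ).re with hP
  set Q := (⟪(CFC.sqrt C ^ r) u, u⟫_ℂ).re with hQ
  have hx0 : 0 ≤ x := norm_nonneg _
  have ha0 : 0 ≤ a := my_inner_nonneg _ (CFC.sqrt_nonneg _) u
  have hb0 : 0 ≤ b := my_inner_nonneg _ (CFC.sqrt_nonneg _) u
  have hr0 : (0:ℝ) < r := lt_of_lt_of_le one_pos hr
  have hschwarz : x ^ 2 ≤ a * b := my_schwarz A u hu
  have hmcB : a ^ r ≤ P := my_mccarthy (CFC.sqrt B) (CFC.sqrt_nonneg _) hr u hu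
  have hmcC : b ^ r ≤ Q := my_mccarthy (CFC.sqrt C) (CFC.sqrt_nonneg _) hr u hu
  have hP0 : 0 ≤ P := le_trans (Real.rpow_nonneg ha0 r) hmcB
  have hQ0 : 0 ≤ Q := le_trans (Real.rpow_nonneg hb0 r) hmcC
  have hsum : (⟪(CFC.sqrt B ^ r + CFC.sqrt C ^ r) u, u⟫_ℂ).re = P + Q := by
    rw [ContinuousLinearMap.add_apply, inner_add_left, Complex.add_re]
  have hsum2 : (⟪(CFC.sqrt B ^ r + CFC.sqrt C ^ r) u, u⟫_ℂ).re
      * (⟪(CFC.sqrt B ^ r + CFC.sqrt C ^ r) u, u⟫_ℂ).re = (P + Q) * (P + Q) := by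
    rw [hsum]
  calc x ^ (2 * r) = (x ^ (2:ℝ)) ^ r := by rw [← Real.rpow_mul hx0]
    _ = (x ^ 2) ^ r := by
        rw [show (2:ℝ) = ((2:ℕ):ℝ) from by norm_num, Real.rpow_natCast]
    _ ≤ (a * b) ^ r := Real.rpow_le_rpow (by positivity) hschwarz hr0.le
    _ = a ^ r * b ^ r := Real.mul_rpow ha0 hb0
    _ ≤ P * Q := mul_le_mul hmcB hmcC (Real.rpow_nonneg hb0 r) hP0
    _ ≤ 1 / 4 * ((P + Q) * (P + Q)) := by nlinarith [sq_nonneg (P - Q)]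
    _ = 1 / 4 * ((⟪(CFC.sqrt B ^ r + CFC.sqrt C ^ r) u, u⟫_ℂ).re
          * (⟪(CFC.sqrt B ^ r + CFC.sqrt C ^ r) u, u⟫_ℂ).re) := by rw [hsum2]
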